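/- Fallback voting is susceptible to constructive control by partition of voters (under both tie-handling rules TE and TP): there exist a fallback voting election (C,V), a candidate c ∈ C that is not the unique FV winner of (C,V), and a partition of V into disjoint sublists V1 and V2 such that each subelection (C,V1) and (C,V2) has a unique FV winner and c is the unique FV winner of the final round (W1 ∪ W2, V), where Wi is the set of FV winners of (C,Vi). -/

import Mathlib

/-!
Fallback voting (Brams and Sanver).  A vote is represented by the list of the
candidates the voter approves of, in order of preference (most preferred
first); all candidates not occurring in the list are disapproved.  The voter
collection is a multiset of such votes.
-/

namespace FV

variable {α : Type} [DecidableEq α]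

/-- The level-`i` score of candidate `c` in the election with votes `V`:
the number of voters who approve of `c` and rank `c` among their top `i`
approved candidates. -/
def levelScore (V : Multiset (List α)) (i : ℕ) (c : α) : ℕ :=
  (V.filter (fun v => c ∈ v.take i)).card

/-- The approval score of candidate `c`: the number of voters approving of `c`. -/
def apprScore (V : Multiset (List α)) (c : α) : ℕ :=
  (V.filter (fun v => c ∈ v)).card

/-- Restriction of the votes to the candidate set `C`: each voter's approval
set and ranking are restricted to `C`. -/
def restrict (C : Finset α) (V : Multiset (List α)) : Multiset (List α) :=
  V.map (fun v => v.filter (fun x => decide (x ∈ C)))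

instance instDecMaj (C : Finset α) (V : Multiset (List α)) :
    DecidablePred (fun i =>
      i ∈ Finset.Icc 1 C.card ∧ ∃ c ∈ C, 2 * levelScore V i c > Multiset.card V) :=
  fun _ => inferInstance

/-- The set of fallback-voting winners of the election `(C,V)`:
if some level `i` with `1 ≤ i ≤ ‖C‖` exists at which some candidate of `C`
has a strict majority (level-`i` score exceeding `‖V‖/2`), then the winners
are the candidates with the largest level-`i₀` score, where `i₀` is the
smallest such level; otherwise the winners are the candidates with the largest
approval score. -/
def winners (C : Finset α) (V : Multiset (List α)) : Finset α :=
  if h : ∃ i, i ∈ Finset.Icc 1 C.card ∧ ∃ c ∈ C, 2 * levelScore V i c > Multiset.card V then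
    C.filter (fun c => ∀ d ∈ C, levelScore V (Nat.find h) d ≤ levelScore V (Nat.find h) c)
  else
    C.filter (fun c => ∀ d ∈ C, apprScore V d ≤ apprScore V c)

/-- The FV winners of the election `(C,V)` restricted to the candidate set `C`. -/
def fwinners (C : Finset α) (V : Multiset (List α)) : Finset α :=
  winners C (restrict C V)

end FV

/- Candidate 2 delays the first majority in the full election to level 2, where 0 and 1 tie.
Splitting off `[2, 0], [0, 1]` makes 0 win at level 2 and the rest makes 1 win at level 1; in the
final round 2 is gone, and 0 has a majority already at level 1. -/

namespace FV

variable {α : Type} [DecidableEq α]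

theorem winners_eq_of_first_majority_level {C : Finset α} {V : Multiset (List α)} {i₀ : ℕ}
    (hmaj : i₀ ∈ Finset.Icc 1 C.card ∧ ∃ c ∈ C, 2 * levelScore V i₀ c > Multiset.card V)
    (hfirst : ∀ j < i₀,
      ¬ (j ∈ Finset.Icc 1 C.card ∧ ∃ c ∈ C, 2 * levelScore V j c > Multiset.card V)) :
    winners C V = C.filter (fun c => ∀ d ∈ C, levelScore V i₀ d ≤ levelScore V i₀ c) := by
  have h : ∃ i, i ∈ Finset.Icc 1 C.card ∧ ∃ c ∈ C, 2 * levelScore V i c > Multiset.card V :=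
    ⟨i₀, hmaj⟩
  rw [winners, dif_pos h, (Nat.find_eq_iff h).mpr ⟨hmaj, hfirst⟩]

end FV

/-- Fallback voting is susceptible to constructive control by partition of
voters (under both tie-handling rules TE and TP): there are an FV election
`(C,V)`, a candidate `c ∈ C` that is not the unique FV winner of `(C,V)`, and
a partition of `V` into disjoint sublists `V1` and `V2` such that each
subelection `(C,V1)` and `(C,V2)` has a unique FV winner and `c` is the unique
FV winner of the final round `(W1 ∪ W2, V)`. -/
theorem fv_susceptible_constructive_partition_voters :
    ∃ (C : Finset ℕ) (V V1 V2 : Multiset (List ℕ)) (c w1 w2 : ℕ),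
      (∀ v ∈ V, v.Nodup ∧ ∀ x ∈ v, x ∈ C) ∧
      c ∈ C ∧ FV.fwinners C V ≠ {c} ∧
      V1 + V2 = V ∧
      FV.fwinners C V1 = {w1} ∧ FV.fwinners C V2 = {w2} ∧
      FV.fwinners ({w1, w2} : Finset ℕ) V = {c} := by
  refine ⟨{0, 1, 2}, {[2, 0], [0, 1]} + {[2, 0], [1], [1]}, {[2, 0], [0, 1]}, {[2, 0], [1], [1]},
    0, 0, 1, by decide, by decide, ?_, rfl, ?_, ?_, ?_⟩
  · rw [FV.fwinners, FV.winners_eq_of_first_majority_level (i₀ := 2) (by decide) (by decide)]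
    decide
  · rw [FV.fwinners, FV.winners_eq_of_first_majority_level (i₀ := 2) (by decide) (by decide)]
    decide
  · rw [FV.fwinners, FV.winners_eq_of_first_majority_level (i₀ := 1) (by decide) (by decide)]
    decide
  · rw [FV.fwinners, FV.winners_eq_of_first_majority_level (i₀ := 1) (by decide) (by decide)]
    decide
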